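/- For any injective column-strict tableau T of shape λ with entries ≤ n, the lexicographically largest monomial appearing in the polynomial δ_T is x(T). -/

import Mathlib

open MvPolynomial

/-- The differential operator associated to the monomial with exponent vector `d`. -/
noncomputable def Dexp {n : ℕ} (d : Fin n →₀ ℕ) :
    Module.End ℚ (MvPolynomial (Fin n) ℚ) :=
  ((List.finRange n).map fun i => ((pderiv i).toLinearMap :
      Module.End ℚ (MvPolynomial (Fin n) ℚ)) ^ (d i)).prod

/-- `odotE f` is the differential operator `∂f = f(∂/∂x_1,…,∂/∂x_n)`. -/
noncomputable def odotE {n : ℕ} (f : MvPolynomial (Fin n) ℚ) :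
    Module.End ℚ (MvPolynomial (Fin n) ℚ) :=
  (AddMonoidAlgebra.coeff f).sum fun d c => c • Dexp d

/-- `pairing f g` is the constant term of `(∂f)(g)`. -/
noncomputable def pairing {n : ℕ} (f g : MvPolynomial (Fin n) ℚ) : ℚ :=
  constantCoeff (odotE f g)


/-- The degree-`d` elementary symmetric polynomial in the variables indexed by
the subset `S` (it is `0` when `d > |S|` and `1` when `d = 0`). -/
noncomputable def eS {n : ℕ} (S : Finset (Fin n)) (d : ℕ) :
    MvPolynomial (Fin n) ℚ :=
  ∑ T ∈ S.powersetCard d, ∏ i ∈ T, X i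

/-- `eS` extended to integer degrees, vanishing in negative degrees. -/
noncomputable def eZ {n : ℕ} (S : Finset (Fin n)) (m : ℤ) :
    MvPolynomial (Fin n) ℚ :=
  if 0 ≤ m then eS S m.toNat else 0

/-- `conj lam j` is the `j`-th part `λ'_j` (for `j ≥ 1`) of the conjugate of
the partition `lam`, i.e. the number of parts of `lam` of size at least `j`. -/
def conj (lam : List ℕ) (j : ℕ) : ℕ := (lam.filter fun p => j ≤ p).length

/-- Griffin's ideal `I_{n,λ}`, generated by `x_i^s` for `1 ≤ i ≤ n` (where `s`
is the number of parts of `λ`) together with the partial elementary symmetric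
polynomials `e_d(S)` for `S ⊆ [n]` and
`d > |S| - λ'_n - λ'_{n-1} - ⋯ - λ'_{n-|S|+1}`. -/
noncomputable def griffinIdeal (n : ℕ) (lam : List ℕ) :
    Ideal (MvPolynomial (Fin n) ℚ) :=
  Ideal.span ((Set.range fun i : Fin n => X i ^ lam.length) ∪
    {f | ∃ (S : Finset (Fin n)) (d : ℕ),
      (S.card : ℤ) - ∑ t ∈ Finset.range S.card, (conj lam (n - t) : ℤ) < (d : ℤ) ∧
      f = eS S d})

open scoped Classical

/-- `(r, j)` (0-based row `r`, column `j`) is a box of the Young diagram of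
`lam`: row `r` has `λ_{r+1}` boxes. -/
def IsBoxOf (lam : List ℕ) (r j : ℕ) : Prop := j < lam.getD r 0

/-- The letter `i` appears in the tableau `T` of shape `lam`. -/
def AppearsIn {n : ℕ} (lam : List ℕ) (T : ℕ → ℕ → Fin n) (i : Fin n) : Prop :=
  ∃ r j, IsBoxOf lam r j ∧ T r j = i

/-- `w` lies in the group `C_T` of permutations stabilizing each column of `T`
and fixing every letter not appearing in `T`. -/
def ColStab {n : ℕ} (lam : List ℕ) (T : ℕ → ℕ → Fin n)
    (w : Equiv.Perm (Fin n)) : Prop :=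
  (∀ i : Fin n, ¬AppearsIn lam T i → w i = i) ∧
  (∀ r j, IsBoxOf lam r j → ∃ r', IsBoxOf lam r' j ∧ w (T r j) = T r' j)

/-- `δ_T = ε_T · x(T)` : the antisymmetrization of the monomial `x(T)`
(whose exponent vector is `a`) over the column-stabilizer of `T`. -/
noncomputable def deltaTsum {n : ℕ} (lam : List ℕ) (T : ℕ → ℕ → Fin n)
    (a : Fin n → ℕ) : MvPolynomial (Fin n) ℚ :=
  ∑ w ∈ Finset.univ.filter (ColStab lam T),
    ((Equiv.Perm.sign w : ℤ) : ℚ) •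
      rename (⇑w) (monomial (Finsupp.equivFunOnFinite.symm a) 1)

/-- The product formula `δ_{C_1} ⋯ δ_{C_r} · ∏_{i ∉ T} x_i^{s-1}`, where
`δ_{C_j}` is the Vandermonde determinant in the variables indexed by the
`j`-th column of `T`. -/
noncomputable def deltaTprod {n : ℕ} (lam : List ℕ) (T : ℕ → ℕ → Fin n) :
    MvPolynomial (Fin n) ℚ :=
  (∏ j ∈ Finset.range (lam.headD 0),
    ∏ p ∈ (Finset.range lam.length ×ˢ Finset.range lam.length).filter
        fun p => p.1 < p.2 ∧ IsBoxOf lam p.1 j ∧ IsBoxOf lam p.2 j,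
      (X (T p.1 j) - X (T p.2 j))) *
  ∏ i ∈ Finset.univ.filter fun i : Fin n => ¬AppearsIn lam T i,
    X i ^ (lam.length - 1)

/-- Strict lexicographic order on exponent vectors, with
`x_1 > x_2 > ⋯ > x_n`. -/
def lexLt {n : ℕ} (u v : Fin n →₀ ℕ) : Prop :=
  ∃ i : Fin n, (∀ j, j < i → u j = v j) ∧ u i < v i

/-!
For `w ∈ C_T` the monomial `w · x(T)` has exponent `i ↦ a (w⁻¹ i)`. If `w ≠ 1`, let `i` be the
least letter moved by `w⁻¹` and `m := w⁻¹ i`. Since `w` moves `m`, the letter `m` lies in `T`, and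
`i = w m` lies in the same column. By minimality and column strictness `m` cannot sit above `i`
(it would be a smaller letter moved by `w⁻¹`), so it sits below `i` and has fewer boxes beneath
it: the exponent at `i` drops while all smaller letters keep theirs. So every `w ≠ 1` gives a lexicographically smaller
monomial, and `x(T)` occurs only for `w = 1`, with coefficient `1`.
-/

theorem Equiv.Perm.exists_apply_ne_forall_lt_apply_eq {α : Type*} [LinearOrder α]
    [WellFoundedLT α] {w : Equiv.Perm α} (hw : w ≠ 1) :
    ∃ i, w i ≠ i ∧ ∀ j < i, w j = j := by
  obtain ⟨i, hi, hmin⟩ := wellFounded_lt.has_min {i | w i ≠ i}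
    (by simpa [Equiv.ext_iff, Set.Nonempty] using hw)
  exact ⟨i, hi, fun j hj => by_contra fun hwj => hmin j hwj hj⟩

theorem Finsupp.mapDomain_perm_equivFunOnFinite_symm_apply {α M : Type*} [Finite α]
    [AddCommMonoid M] (w : Equiv.Perm α) (a : α → M) (i : α) :
    Finsupp.mapDomain w (Finsupp.equivFunOnFinite.symm a) i = a (w⁻¹ i) :=
  Finsupp.mapDomain_equiv_apply _ _

theorem lexLt_irrefl {n : ℕ} (u : Fin n →₀ ℕ) : ¬lexLt u u :=
  fun ⟨_, _, h⟩ => lt_irrefl _ h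

section Tableau

variable {n : ℕ} {lam : List ℕ} {T : ℕ → ℕ → Fin n}

theorem IsBoxOf.lt_length {r j : ℕ} (h : IsBoxOf lam r j) : r < lam.length := by
  by_contra h'
  rw [IsBoxOf, List.getD_eq_default _ _ (not_lt.mp h')] at h
  exact Nat.not_lt_zero _ h

theorem card_boxes_below_lt {r r' j : ℕ} (hb' : IsBoxOf lam r' j) (h : r < r') :
    ((Finset.range lam.length).filter fun r'' => r' < r'' ∧ IsBoxOf lam r'' j).card <
      ((Finset.range lam.length).filter fun r'' => r < r'' ∧ IsBoxOf lam r'' j).card := by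
  refine Finset.card_lt_card (Finset.ssubset_iff_of_subset ?_ |>.mpr ⟨r', ?_, ?_⟩)
  · intro x hx
    simp only [Finset.mem_filter, Finset.mem_range] at hx ⊢
    exact ⟨hx.1, h.trans hx.2.1, hx.2.2⟩
  · simpa using ⟨hb'.lt_length, h, hb'⟩
  · simp

theorem colStab_one : ColStab lam T 1 :=
  ⟨fun _ _ => rfl, fun r _ hb => ⟨r, hb, rfl⟩⟩

theorem coeff_deltaTsum (a : Fin n → ℕ) (d : Fin n →₀ ℕ) :
    coeff d (deltaTsum lam T a) = ∑ w ∈ Finset.univ.filter (ColStab lam T),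
      if Finsupp.mapDomain w (Finsupp.equivFunOnFinite.symm a) = d then
        ((Equiv.Perm.sign w : ℤ) : ℚ) else 0 := by
  simp only [deltaTsum, coeff_sum, rename_monomial, coeff_smul, coeff_monomial, smul_eq_mul,
    mul_ite, mul_one, mul_zero]

theorem lexLt_mapDomain_of_colStab
    (hcolstrict : ∀ r r' j, IsBoxOf lam r j → IsBoxOf lam r' j → r < r' → T r j < T r' j)
    {a : Fin n → ℕ}
    (hanti : ∀ r r' j, IsBoxOf lam r j → IsBoxOf lam r' j → r < r' → a (T r' j) < a (T r j))
    {w : Equiv.Perm (Fin n)} (hw : ColStab lam T w) (hw1 : w ≠ 1) :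
    lexLt (Finsupp.mapDomain w (Finsupp.equivFunOnFinite.symm a))
      (Finsupp.equivFunOnFinite.symm a) := by
  obtain ⟨i, hi, hmin⟩ := Equiv.Perm.exists_apply_ne_forall_lt_apply_eq (inv_ne_one.mpr hw1)
  simp only [lexLt, Finsupp.mapDomain_perm_equivFunOnFinite_symm_apply,
    Finsupp.coe_equivFunOnFinite_symm]
  refine ⟨i, fun j hj => by rw [hmin j hj], ?_⟩
  set m := w⁻¹ i
  have hwm : w m = i := w.apply_symm_apply i
  obtain ⟨r', j, hb', hm⟩ : AppearsIn lam T m :=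
    by_contra fun hm => hi (by rw [← hwm, hw.1 m hm])
  obtain ⟨r, hb, hi'⟩ := hw.2 r' j hb'
  rw [hm, hwm] at hi'
  have hr : r < r' := by
    rcases lt_trichotomy r' r with h | rfl | h
    · have hlt : m < i := by rw [← hm, hi']; exact hcolstrict r' r j hb' hb h
      exact absurd (w⁻¹.injective (hmin m hlt)) hi
    · exact absurd (hm.symm.trans hi'.symm) hi
    · exact h
  rw [← hm, hi']
  exact hanti r r' j hb hb' hr

end Tableau

theorem deltaT_leading_monomial_general (n : ℕ) (lam : List ℕ)
    (T : ℕ → ℕ → Fin n)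
    (hcolstrict : ∀ r r' j, IsBoxOf lam r j → IsBoxOf lam r' j → r < r' →
      T r j < T r' j)
    (a : Fin n → ℕ)
    (ha1 : ∀ r j, IsBoxOf lam r j →
      a (T r j) = ((Finset.range lam.length).filter
        fun r' => r < r' ∧ IsBoxOf lam r' j).card)
    : coeff (Finsupp.equivFunOnFinite.symm a) (deltaTsum lam T a) ≠ 0 ∧
      ∀ d ∈ (deltaTsum lam T a).support, d ≠ Finsupp.equivFunOnFinite.symm a →
        lexLt d (Finsupp.equivFunOnFinite.symm a) := by
  have hanti : ∀ r r' j, IsBoxOf lam r j → IsBoxOf lam r' j → r < r' →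
      a (T r' j) < a (T r j) := fun r r' j hb hb' h => by
    rw [ha1 r j hb, ha1 r' j hb']
    exact card_boxes_below_lt hb' h
  have hlex := fun w (hw : w ∈ Finset.univ.filter (ColStab lam T)) =>
    lexLt_mapDomain_of_colStab hcolstrict hanti (Finset.mem_filter.mp hw).2
  constructor
  · rw [coeff_deltaTsum, Finset.sum_eq_single_of_mem 1 (by simpa using colStab_one)]
    · simp
    · intro w hw hw1
      exact if_neg fun h => lexLt_irrefl _ (h ▸ hlex w hw hw1)
  · intro d hd hdA
    rw [mem_support_iff, coeff_deltaTsum] at hd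
    obtain ⟨w, hw, hwd⟩ := Finset.exists_ne_zero_of_sum_ne_zero hd
    have hd' : Finsupp.mapDomain w (Finsupp.equivFunOnFinite.symm a) = d := by
      by_contra h; exact hwd (if_neg h)
    subst hd'
    refine hlex w hw fun hw1 => hdA ?_
    simp [hw1]

/-- the lexicographically largest monomial appearing in `δ_T`
is `x(T)`. -/
theorem deltaT_leading_monomial (n k : ℕ) (lam : List ℕ) (hk : 0 < k) (hkn : k ≤ n)
    (hsort : lam.Pairwise (· ≥ ·)) (hsum : lam.sum = k)
    (T : ℕ → ℕ → Fin n)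
    (hcolstrict : ∀ r r' j, IsBoxOf lam r j → IsBoxOf lam r' j → r < r' →
      T r j < T r' j)
    (hinj : ∀ r j r' j', IsBoxOf lam r j → IsBoxOf lam r' j' →
      T r j = T r' j' → r = r' ∧ j = j')
    (a : Fin n → ℕ)
    (ha1 : ∀ r j, IsBoxOf lam r j →
      a (T r j) = ((Finset.range lam.length).filter
        fun r' => r < r' ∧ IsBoxOf lam r' j).card)
    (ha2 : ∀ i : Fin n, ¬AppearsIn lam T i → a i = lam.length - 1)
    : coeff (Finsupp.equivFunOnFinite.symm a) (deltaTsum lam T a) ≠ 0 ∧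
      ∀ d ∈ (deltaTsum lam T a).support, d ≠ Finsupp.equivFunOnFinite.symm a →
        lexLt d (Finsupp.equivFunOnFinite.symm a) :=
  deltaT_leading_monomial_general n lam T hcolstrict a ha1
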